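/- arXiv:2402.10240 — 4 statements merged into one kernel-verified Lean document; each statement's English description precedes it below -/
import Mathlib

section
/- (Value Lemma, discrete-time form for grit.) The grit satisfies the Bellman optimality recursion: Γ 0 s = (if s ∈ B then 1 else 0) for every state s, and for every n : ℕ and every state s, Γ (n+1) s = (if s ∈ B then 1 else (the minimum over actions a ∈ A of ∑ s', (p s a s').toReal * Γ n s')). In particular, s ↦ −Γ n s is the optimal n-step value function of the MDP whose reward is −1 upon entering B and 0 otherwise. -/
open scoped BigOperators

/-- Shift of a policy: `(shift π) k = π (k+1)`. -/
def shiftPolicy {S A : Type*} (π : ℕ → S → A) : ℕ → S → A := fun k => π (k + 1)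

/-- Hitting probability of `B` within `n` steps from state `s` under policy `π`:
`h π 0 s = (if s ∈ B then 1 else 0)` and
`h π (n+1) s = (if s ∈ B then 1 else ∑ s', (p s (π 0 s) s').toReal * h (shift π) n s')`. -/
noncomputable def hitProb {S A : Type*} [Fintype S]
    (p : S → A → PMF S) (B : Set S) [DecidablePred (· ∈ B)] :
    (ℕ → S → A) → ℕ → S → ℝ
  | _, 0, s => if s ∈ B then 1 else 0
  | π, n + 1, s =>
      if s ∈ B then 1
      else ∑ s', (p s (π 0 s) s').toReal * hitProb p B (shiftPolicy π) n s'

/-- Grit: the infimum over all policies of the hitting probability of `B`. -/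
noncomputable def grit {S A : Type*} [Fintype S]
    (p : S → A → PMF S) (B : Set S) [DecidablePred (· ∈ B)] (n : ℕ) (s : S) : ℝ :=
  ⨅ π : ℕ → S → A, hitProb p B π n s

/-- Reachability: the supremum over all policies of the hitting probability of `B`. -/
noncomputable def reach {S A : Type*} [Fintype S]
    (p : S → A → PMF S) (B : Set S) [DecidablePred (· ∈ B)] (n : ℕ) (s : S) : ℝ :=
  ⨆ π : ℕ → S → A, hitProb p B π n s

/-!
The lower bound `Γ (n+1) s ≥ min_a ∑ p s a s' Γ n s'` holds for every policy, since its tail is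
no better than `Γ n` at each successor state. For the upper bound the minimum must be realised
by a single policy, and policies may not depend on the starting state; so one shows by
induction that some policy attains `Γ n` at all states at once: prepend to a policy optimal
for `n` steps a greedy first decision.
-/

namespace MDP

variable {S A : Type*} [Fintype S] (p : S → A → PMF S) (B : Set S) [DecidablePred (· ∈ B)]

noncomputable def bellmanOp (V : S → ℝ) (s : S) : ℝ :=
  if s ∈ B then 1 else ⨅ a : A, ∑ s', (p s a s').toReal * V s'

def consPolicy (d : S → A) (π : ℕ → S → A) : ℕ → S → A
  | 0 => d
  | k + 1 => π k

omit [Fintype S] in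
@[simp]
theorem shiftPolicy_consPolicy (d : S → A) (π : ℕ → S → A) :
    shiftPolicy (consPolicy d π) = π :=
  rfl

theorem hitProb_nonneg (π : ℕ → S → A) (n : ℕ) (s : S) : 0 ≤ hitProb p B π n s := by
  induction n generalizing π s with
  | zero => unfold hitProb; split_ifs <;> norm_num
  | succ n ih =>
    unfold hitProb
    split_ifs
    · exact zero_le_one
    · exact Finset.sum_nonneg fun s' _ => mul_nonneg ENNReal.toReal_nonneg (ih _ _)

theorem grit_le_hitProb (π : ℕ → S → A) (n : ℕ) (s : S) : grit p B n s ≤ hitProb p B π n s :=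
  ciInf_le ⟨0, by rintro _ ⟨σ, rfl⟩; exact hitProb_nonneg p B σ n s⟩ π

theorem grit_zero [Nonempty A] (s : S) : grit p B 0 s = if s ∈ B then 1 else 0 :=
  ciInf_const

theorem bellmanOp_grit_le_hitProb_succ [Finite A] (π : ℕ → S → A) (n : ℕ) (s : S) :
    bellmanOp p B (grit p B n) s ≤ hitProb p B π (n + 1) s := by
  unfold bellmanOp hitProb
  split_ifs
  · exact le_rfl
  · calc (⨅ a : A, ∑ s', (p s a s').toReal * grit p B n s')
        ≤ ∑ s', (p s (π 0 s) s').toReal * grit p B n s' :=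
          ciInf_le (Set.finite_range _).bddBelow _
      _ ≤ ∑ s', (p s (π 0 s) s').toReal * hitProb p B (shiftPolicy π) n s' :=
          Finset.sum_le_sum fun s' _ =>
            mul_le_mul_of_nonneg_left (grit_le_hitProb p B _ n s') ENNReal.toReal_nonneg

theorem grit_succ_eq_of_hitProb_eq [Finite A] {n : ℕ} {s : S} {σ : ℕ → S → A}
    (hσ : hitProb p B σ (n + 1) s = bellmanOp p B (grit p B n) s) :
    grit p B (n + 1) s = bellmanOp p B (grit p B n) s :=
  have : Nonempty (ℕ → S → A) := ⟨σ⟩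
  le_antisymm (hσ ▸ grit_le_hitProb p B σ (n + 1) s)
    (le_ciInf fun π => bellmanOp_grit_le_hitProb_succ p B π n s)

theorem exists_hitProb_succ_eq_bellmanOp [Finite A] [Nonempty A] {n : ℕ} {π : ℕ → S → A}
    (hπ : ∀ s, hitProb p B π n s = grit p B n s) :
    ∃ σ : ℕ → S → A, ∀ s, hitProb p B σ (n + 1) s = bellmanOp p B (grit p B n) s := by
  choose d hd using fun s =>
    exists_eq_ciInf_of_finite (f := fun a : A => ∑ s', (p s a s').toReal * grit p B n s')
  refine ⟨consPolicy d π, fun s => ?_⟩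
  unfold bellmanOp hitProb
  split_ifs
  · rfl
  · simp only [shiftPolicy_consPolicy, hπ, ← hd s]
    rfl

theorem exists_optimal_policy [Finite A] [Nonempty A] (n : ℕ) :
    ∃ π : ℕ → S → A, ∀ s, hitProb p B π n s = grit p B n s := by
  induction n with
  | zero => exact ⟨Classical.arbitrary _, fun s => (grit_zero p B s).symm⟩
  | succ n ih =>
    obtain ⟨π, hπ⟩ := ih
    obtain ⟨σ, hσ⟩ := exists_hitProb_succ_eq_bellmanOp p B hπ
    exact ⟨σ, fun s => (hσ s).trans (grit_succ_eq_of_hitProb_eq p B (hσ s)).symm⟩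

theorem grit_succ [Finite A] [Nonempty A] (n : ℕ) (s : S) :
    grit p B (n + 1) s = bellmanOp p B (grit p B n) s := by
  obtain ⟨π, hπ⟩ := exists_optimal_policy p B n
  obtain ⟨σ, hσ⟩ := exists_hitProb_succ_eq_bellmanOp p B hπ
  exact grit_succ_eq_of_hitProb_eq p B (hσ s)

end MDP

theorem grit_bellman_general {S A : Type*} [Fintype S] [Fintype A] [Nonempty A]
    (p : S → A → PMF S) (B : Set S) [DecidablePred (· ∈ B)] :
    (∀ s : S, grit p B 0 s = if s ∈ B then 1 else 0) ∧
    (∀ (n : ℕ) (s : S), grit p B (n + 1) s =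
      if s ∈ B then 1
      else ⨅ a : A, ∑ s', (p s a s').toReal * grit p B n s') :=
  ⟨MDP.grit_zero p B, MDP.grit_succ p B⟩

/-- **Value Lemma, discrete-time form for grit.**  The grit satisfies the Bellman optimality
recursion: `Γ 0 s = (if s ∈ B then 1 else 0)` and
`Γ (n+1) s = (if s ∈ B then 1 else ⨅ a, ∑ s', (p s a s').toReal * Γ n s')`, so that
`s ↦ -Γ n s` is the optimal `n`-step value function of the MDP with reward `-1` upon
entering `B` and `0` otherwise. -/
theorem grit_bellman {S A : Type*} [Fintype S] [Nonempty S] [Fintype A] [Nonempty A]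
    (p : S → A → PMF S) (B : Set S) [DecidablePred (· ∈ B)] :
    (∀ s : S, grit p B 0 s = if s ∈ B then 1 else 0) ∧
    (∀ (n : ℕ) (s : S), grit p B (n + 1) s =
      if s ∈ B then 1
      else ⨅ a : A, ∑ s', (p s a s').toReal * grit p B n s') :=
  grit_bellman_general p B
end

section
/- (Value Lemma, discrete-time form for reachability.) The reachability satisfies the Bellman optimality recursion: Λ 0 s = (if s ∈ B then 1 else 0) for every state s, and for every n : ℕ and every state s, Λ (n+1) s = (if s ∈ B then 1 else (the maximum over actions a ∈ A of ∑ s', (p s a s').toReal * Λ n s')). In particular, s ↦ Λ n s is the optimal n-step value function of the MDP whose reward is +1 upon entering B and 0 otherwise. -/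
open scoped BigOperators

/-! Backward induction: the sup over policies of a one-step lookahead splits into a choice of
the first action and an independent choice of the tail policy. A tail policy that is optimal
from every state at once exists at every horizon (by induction), and a greedy first action
exists because `A` is finite, so the sup is attained by "greedy action, then optimal tail",
whose value is the Bellman update. -/

theorem PMF.sum_toReal_eq_one {α : Type*} [Fintype α] (q : PMF α) : ∑ a, (q a).toReal = 1 := by
  rw [← ENNReal.toReal_sum fun a _ => q.apply_ne_top a,
    ← tsum_fintype (L := SummationFilter.unconditional _), q.tsum_coe, ENNReal.toReal_one]

section Reachability

variable {S A : Type*} [Fintype S] (p : S → A → PMF S) (B : Set S) [DecidablePred (· ∈ B)]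

noncomputable def bellmanReach (V : S → ℝ) (s : S) : ℝ :=
  if s ∈ B then 1 else ⨆ a : A, ∑ s', (p s a s').toReal * V s'

theorem hitProb_le_one (π : ℕ → S → A) (n : ℕ) (s : S) : hitProb p B π n s ≤ 1 := by
  induction n generalizing π s with
  | zero => simp only [hitProb]; split <;> norm_num
  | succ n ih =>
    simp only [hitProb]
    split
    · exact le_rfl
    · calc ∑ s', (p s (π 0 s) s').toReal * hitProb p B (shiftPolicy π) n s'
          ≤ ∑ s', (p s (π 0 s) s').toReal := Finset.sum_le_sum fun s' _ =>
            mul_le_of_le_one_right ENNReal.toReal_nonneg (ih _ _)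
        _ = 1 := (p s (π 0 s)).sum_toReal_eq_one

theorem hitProb_le_reach (π : ℕ → S → A) (n : ℕ) (s : S) :
    hitProb p B π n s ≤ reach p B n s :=
  le_ciSup ⟨1, Set.forall_mem_range.2 fun σ => hitProb_le_one p B σ n s⟩ π

theorem reach_zero [Nonempty A] (s : S) : reach p B 0 s = if s ∈ B then 1 else 0 :=
  ciSup_const

theorem hitProb_cons_succ (d : S → A) (σ : ℕ → S → A) (n : ℕ) (s : S) :
    hitProb p B (Stream'.cons d σ) (n + 1) s =
      if s ∈ B then 1 else ∑ s', (p s (d s) s').toReal * hitProb p B σ n s' :=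
  rfl

theorem hitProb_succ_le_bellmanReach [Finite A] (π : ℕ → S → A) (n : ℕ) (s : S) :
    hitProb p B π (n + 1) s ≤ bellmanReach p B (reach p B n) s := by
  simp only [hitProb, bellmanReach]
  split
  · exact le_rfl
  · calc ∑ s', (p s (π 0 s) s').toReal * hitProb p B (shiftPolicy π) n s'
        ≤ ∑ s', (p s (π 0 s) s').toReal * reach p B n s' := Finset.sum_le_sum fun s' _ =>
          mul_le_mul_of_nonneg_left (hitProb_le_reach p B _ n s') ENNReal.toReal_nonneg
      _ ≤ ⨆ a : A, ∑ s', (p s a s').toReal * reach p B n s' :=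
          Finite.le_ciSup_of_le (π 0 s) le_rfl

theorem reach_succ_le_bellmanReach [Finite A] [Nonempty A] (n : ℕ) (s : S) :
    reach p B (n + 1) s ≤ bellmanReach p B (reach p B n) s :=
  ciSup_le fun π => hitProb_succ_le_bellmanReach p B π n s

theorem exists_greedy [Finite A] [Nonempty A] (V : S → ℝ) :
    ∃ d : S → A, ∀ s, bellmanReach p B V s =
      if s ∈ B then 1 else ∑ s', (p s (d s) s').toReal * V s' := by
  choose d hd using fun s => Finite.exists_max fun a : A => ∑ s', (p s a s').toReal * V s'
  refine ⟨d, fun s => ?_⟩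
  rw [bellmanReach, le_antisymm (ciSup_le (hd s)) (Finite.le_ciSup_of_le (d s) le_rfl)]

theorem exists_hitProb_eq_bellmanReach [Finite A] [Nonempty A] {σ : ℕ → S → A} {n : ℕ}
    (hσ : hitProb p B σ n = reach p B n) :
    ∃ τ : ℕ → S → A, hitProb p B τ (n + 1) = bellmanReach p B (reach p B n) := by
  obtain ⟨d, hd⟩ := exists_greedy p B (reach p B n)
  exact ⟨Stream'.cons d σ, funext fun s => by rw [hitProb_cons_succ, hσ, hd]⟩

theorem exists_hitProb_eq_reach [Finite A] [Nonempty A] (n : ℕ) :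
    ∃ σ : ℕ → S → A, hitProb p B σ n = reach p B n := by
  induction n with
  | zero => exact ⟨Classical.arbitrary _, funext fun s => (reach_zero p B s).symm⟩
  | succ n ih =>
    obtain ⟨σ, hσ⟩ := ih
    obtain ⟨τ, hτ⟩ := exists_hitProb_eq_bellmanReach p B hσ
    refine ⟨τ, funext fun s => le_antisymm (hitProb_le_reach p B τ _ s) ?_⟩
    exact hτ ▸ reach_succ_le_bellmanReach p B n s

theorem reach_succ [Finite A] [Nonempty A] (n : ℕ) :
    reach p B (n + 1) = bellmanReach p B (reach p B n) := by
  obtain ⟨σ, hσ⟩ := exists_hitProb_eq_reach p B n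
  obtain ⟨τ, hτ⟩ := exists_hitProb_eq_bellmanReach p B hσ
  exact funext fun s => le_antisymm (reach_succ_le_bellmanReach p B n s)
    (hτ ▸ hitProb_le_reach p B τ _ s)

end Reachability

theorem reach_bellman_general {S A : Type*} [Fintype S] [Fintype A] [Nonempty A]
    (p : S → A → PMF S) (B : Set S) [DecidablePred (· ∈ B)] :
    (∀ s : S, reach p B 0 s = if s ∈ B then 1 else 0) ∧
    (∀ (n : ℕ) (s : S), reach p B (n + 1) s =
      if s ∈ B then 1
      else ⨆ a : A, ∑ s', (p s a s').toReal * reach p B n s') :=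
  ⟨reach_zero p B, fun n => congrFun (reach_succ p B n)⟩

/-- **Value Lemma, discrete-time form for reachability.**  The reachability satisfies the
Bellman optimality recursion: `Λ 0 s = (if s ∈ B then 1 else 0)` and
`Λ (n+1) s = (if s ∈ B then 1 else ⨆ a, ∑ s', (p s a s').toReal * Λ n s')`, so that
`s ↦ Λ n s` is the optimal `n`-step value function of the MDP with reward `+1` upon
entering `B` and `0` otherwise. -/
theorem reach_bellman {S A : Type*} [Fintype S] [Nonempty S] [Fintype A] [Nonempty A]
    (p : S → A → PMF S) (B : Set S) [DecidablePred (· ∈ B)] :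
    (∀ s : S, reach p B 0 s = if s ∈ B then 1 else 0) ∧
    (∀ (n : ℕ) (s : S), reach p B (n + 1) s =
      if s ∈ B then 1
      else ⨆ a : A, ∑ s', (p s a s').toReal * reach p B n s') :=
  reach_bellman_general p B
end

section
/- (Existence of uniformly optimal policies, used in the proof of the Value Lemma.) For every horizon n : ℕ there exists a policy π* : ℕ → S → A such that h π* n s = Γ n s for every state s simultaneously (a policy attaining the minimum probability of B's occurrence from every state), and there exists a policy π̄* : ℕ → S → A such that h π̄* n s = Λ n s for every state s simultaneously (a policy attaining the maximum probability of B's occurrence from every state). In particular, the infimum defining Γ n s and the supremum defining Λ n s are attained. -/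
/-!
Backward induction on the horizon. Given a policy that is optimal from every state for horizon
`n`, choose at each state an action optimising the one-step expectation of its hitting
probability, and follow it by that policy. Because the transition weights are nonnegative, the
resulting policy is optimal for horizon `n + 1` from every state; finiteness of `A` makes the
optimising action exist.
-/

open scoped BigOperators

def consPolicy {S A : Type*} (d : S → A) (π : ℕ → S → A) : ℕ → S → A
  | 0 => d
  | k + 1 => π k

section HitProb

variable {S A : Type*} [Fintype S] (p : S → A → PMF S) (B : Set S) [DecidablePred (· ∈ B)]

noncomputable def stepValue (v : S → ℝ) (s : S) (a : A) : ℝ :=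
  ∑ s', (p s a s').toReal * v s'

variable {p} in
lemma stepValue_mono {v w : S → ℝ} (hvw : ∀ s, v s ≤ w s) (s : S) (a : A) :
    stepValue p v s a ≤ stepValue p w s a :=
  Finset.sum_le_sum fun s' _ => mul_le_mul_of_nonneg_left (hvw s') ENNReal.toReal_nonneg

lemma hitProb_succ (π : ℕ → S → A) (n : ℕ) (s : S) :
    hitProb p B π (n + 1) s =
      if s ∈ B then 1 else stepValue p (hitProb p B (shiftPolicy π) n) s (π 0 s) := by
  rw [hitProb, stepValue]

variable {p B} in
lemma hitProb_succ_le_hitProb_succ {π σ : ℕ → S → A} {n : ℕ}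
    (h : ∀ s, s ∉ B → stepValue p (hitProb p B (shiftPolicy π) n) s (π 0 s) ≤
      stepValue p (hitProb p B (shiftPolicy σ) n) s (σ 0 s)) (s : S) :
    hitProb p B π (n + 1) s ≤ hitProb p B σ (n + 1) s := by
  rw [hitProb_succ, hitProb_succ]
  split_ifs with hs
  · exact le_rfl
  · exact h s hs

variable [Finite A] [Nonempty A]

lemma exists_policy_hitProb_le (n : ℕ) :
    ∃ πstar : ℕ → S → A, ∀ π s, hitProb p B πstar n s ≤ hitProb p B π n s := by
  induction n with
  | zero => exact ⟨fun _ _ => Classical.arbitrary A, fun π s => by simp only [hitProb, le_rfl]⟩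
  | succ n ih =>
    obtain ⟨πstar, hπstar⟩ := ih
    choose d hd using fun s => Finite.exists_min (stepValue p (hitProb p B πstar n) s)
    refine ⟨consPolicy d πstar, fun π => hitProb_succ_le_hitProb_succ fun s _ => ?_⟩
    calc stepValue p (hitProb p B πstar n) s (d s)
        ≤ stepValue p (hitProb p B πstar n) s (π 0 s) := hd s _
      _ ≤ stepValue p (hitProb p B (shiftPolicy π) n) s (π 0 s) :=
          stepValue_mono (hπstar _) s _

lemma exists_policy_le_hitProb (n : ℕ) :
    ∃ πbar : ℕ → S → A, ∀ π s, hitProb p B π n s ≤ hitProb p B πbar n s := by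
  induction n with
  | zero => exact ⟨fun _ _ => Classical.arbitrary A, fun π s => by simp only [hitProb, le_rfl]⟩
  | succ n ih =>
    obtain ⟨πbar, hπbar⟩ := ih
    choose d hd using fun s => Finite.exists_max (stepValue p (hitProb p B πbar n) s)
    refine ⟨consPolicy d πbar, fun π => hitProb_succ_le_hitProb_succ fun s _ => ?_⟩
    calc stepValue p (hitProb p B (shiftPolicy π) n) s (π 0 s)
        ≤ stepValue p (hitProb p B πbar n) s (π 0 s) := stepValue_mono (hπbar _) s _
      _ ≤ stepValue p (hitProb p B πbar n) s (d s) := hd s _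

end HitProb

theorem exists_uniformly_optimal_policy_general {S A : Type*} [Fintype S]
    [Fintype A] [Nonempty A]
    (p : S → A → PMF S) (B : Set S) [DecidablePred (· ∈ B)] (n : ℕ) :
    (∃ πstar : ℕ → S → A, ∀ s : S, hitProb p B πstar n s = grit p B n s) ∧
    (∃ πbar : ℕ → S → A, ∀ s : S, hitProb p B πbar n s = reach p B n s) := by
  obtain ⟨πstar, hπstar⟩ := exists_policy_hitProb_le p B n
  obtain ⟨πbar, hπbar⟩ := exists_policy_le_hitProb p B n
  refine ⟨⟨πstar, fun s => ?_⟩, ⟨πbar, fun s => ?_⟩⟩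
  · exact le_antisymm (le_ciInf (hπstar · s))
      (ciInf_le ⟨_, Set.forall_mem_range.2 (hπstar · s)⟩ πstar)
  · exact le_antisymm (le_ciSup ⟨_, Set.forall_mem_range.2 (hπbar · s)⟩ πbar)
      (ciSup_le (hπbar · s))

/-- **Existence of uniformly optimal policies.**  For every horizon `n` there is a policy
attaining the grit (minimum hitting probability of `B`) from every state simultaneously, and a
policy attaining the reachability (maximum hitting probability of `B`) from every state
simultaneously; in particular the infimum defining `Γ n s` and the supremum defining `Λ n s`
are attained. -/
theorem exists_uniformly_optimal_policy {S A : Type*} [Fintype S] [Nonempty S]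
    [Fintype A] [Nonempty A]
    (p : S → A → PMF S) (B : Set S) [DecidablePred (· ∈ B)] (n : ℕ) :
    (∃ πstar : ℕ → S → A, ∀ s : S, hitProb p B πstar n s = grit p B n s) ∧
    (∃ πbar : ℕ → S → A, ∀ s : S, hitProb p B πbar n s = reach p B n s) :=
  exists_uniformly_optimal_policy_general p B n
end

section
/- (Unity Proposition, discrete-time form.) (a) For every n : ℕ and every state s, Γ n s = 1 if and only if h π n s = 1 for every policy π; that is, grit equals one at s exactly when B occurs within n steps with probability one regardless of future actions and stochasticity. (b) If s ∉ B and Γ (n+1) s = 1, then for every action a and every state s' in the support of p s a, one has Γ n s' = 1; that is, once grit reaches unity it remains at unity with probability one under every action until B occurs. -/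
open scoped BigOperators

theorem Finset.eq_of_sum_mul_eq_of_le {ι R : Type*} [CommRing R] [LinearOrder R]
    [IsStrictOrderedRing R] {s : Finset ι} {w f : ι → R} {c : R}
    (hw : ∀ i ∈ s, 0 ≤ w i) (hw_sum : ∑ i ∈ s, w i = 1) (hf : ∀ i ∈ s, f i ≤ c)
    (hwf : ∑ i ∈ s, w i * f i = c) {i : ι} (hi : i ∈ s) (hwi : w i ≠ 0) : f i = c := by
  have hgap : ∑ j ∈ s, w j * (c - f j) = 0 := by
    simp only [mul_sub, Finset.sum_sub_distrib, ← Finset.sum_mul, hw_sum, hwf, one_mul, sub_self]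
  have hgap_nonneg : ∀ j ∈ s, 0 ≤ w j * (c - f j) := fun j hj =>
    mul_nonneg (hw j hj) (sub_nonneg.mpr (hf j hj))
  have hgap_i := (Finset.sum_eq_zero_iff_of_nonneg hgap_nonneg).mp hgap i hi
  exact (sub_eq_zero.mp ((mul_eq_zero.mp hgap_i).resolve_left hwi)).symm

@[simp]
theorem shiftPolicy_consPolicy {S A : Type*} (d : S → A) (π : ℕ → S → A) :
    shiftPolicy (consPolicy d π) = π :=
  rfl

section HitProb

variable {S A : Type*} [Fintype S] (p : S → A → PMF S) (B : Set S) [DecidablePred (· ∈ B)]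

theorem hitProb_nonneg (π : ℕ → S → A) (n : ℕ) (s : S) : 0 ≤ hitProb p B π n s := by
  induction n generalizing π s with
  | zero => unfold hitProb; split_ifs <;> norm_num
  | succ n ih =>
    unfold hitProb
    split_ifs
    · exact zero_le_one
    · exact Finset.sum_nonneg fun s' _ => mul_nonneg ENNReal.toReal_nonneg (ih _ s')

theorem hitProb_consPolicy_succ {s : S} (hs : s ∉ B) (d : S → A) (π : ℕ → S → A) (n : ℕ) :
    hitProb p B (consPolicy d π) (n + 1) s =
      ∑ s', (p s (d s) s').toReal * hitProb p B π n s' := by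
  rw [hitProb, if_neg hs, shiftPolicy_consPolicy]
  rfl

theorem grit_eq_one_iff [Nonempty A] (n : ℕ) (s : S) :
    grit p B n s = 1 ↔ ∀ π : ℕ → S → A, hitProb p B π n s = 1 := by
  constructor
  · intro hgrit π
    have hbdd : BddBelow (Set.range fun π : ℕ → S → A => hitProb p B π n s) :=
      ⟨0, by rintro _ ⟨σ, rfl⟩; exact hitProb_nonneg p B σ n s⟩
    exact le_antisymm (hitProb_le_one p B π n s) (hgrit ▸ ciInf_le hbdd π)
  · intro hall
    simp only [grit, hall, ciInf_const]

theorem hitProb_eq_one_of_mem_support {s : S} (hs : s ∉ B) {n : ℕ}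
    (hsure : ∀ π : ℕ → S → A, hitProb p B π (n + 1) s = 1) (a : A) {s' : S}
    (hs' : s' ∈ (p s a).support) (π : ℕ → S → A) : hitProb p B π n s' = 1 := by
  have hstep := hitProb_consPolicy_succ p B hs (fun _ => a) π n
  rw [hsure] at hstep
  refine Finset.eq_of_sum_mul_eq_of_le (fun _ _ => ENNReal.toReal_nonneg)
    (p s a).sum_toReal_eq_one (fun s'' _ => hitProb_le_one p B π n s'') hstep.symm
    (Finset.mem_univ s') ?_
  exact ENNReal.toReal_ne_zero.mpr ⟨(PMF.mem_support_iff _ _).mp hs', (p s a).apply_ne_top s'⟩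

end HitProb

theorem unity_proposition_general {S A : Type*} [Fintype S] [Nonempty A]
    (p : S → A → PMF S) (B : Set S) [DecidablePred (· ∈ B)] :
    (∀ (n : ℕ) (s : S), grit p B n s = 1 ↔ ∀ π : ℕ → S → A, hitProb p B π n s = 1) ∧
    (∀ (n : ℕ) (s : S), s ∉ B → grit p B (n + 1) s = 1 →
      ∀ (a : A), ∀ s' ∈ (p s a).support, grit p B n s' = 1) := by
  refine ⟨grit_eq_one_iff p B, fun n s hs hgrit a s' hs' => ?_⟩
  rw [grit_eq_one_iff] at hgrit ⊢
  exact hitProb_eq_one_of_mem_support p B hs hgrit a hs'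

/-- **Unity Proposition, discrete-time form.**
(a) `Γ n s = 1` iff `h π n s = 1` for every policy `π`: grit equals one at `s` exactly when
`B` occurs within `n` steps with probability one regardless of future actions and stochasticity.
(b) If `s ∉ B` and `Γ (n+1) s = 1`, then for every action `a` and every state `s'` in the
support of `p s a`, `Γ n s' = 1`: once grit reaches unity it remains at unity with probability
one under every action until `B` occurs. -/
theorem unity_proposition {S A : Type*} [Fintype S] [Nonempty S] [Fintype A] [Nonempty A]
    (p : S → A → PMF S) (B : Set S) [DecidablePred (· ∈ B)] :
    (∀ (n : ℕ) (s : S), grit p B n s = 1 ↔ ∀ π : ℕ → S → A, hitProb p B π n s = 1) ∧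
    (∀ (n : ℕ) (s : S), s ∉ B → grit p B (n + 1) s = 1 →
      ∀ (a : A), ∀ s' ∈ (p s a).support, grit p B n s' = 1) :=
  unity_proposition_general p B
end
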